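/- Let M be an n × n matrix over a field where row j is supported on the prefix {1,...,m_j}. Suppose the multiset {m_1,...,m_n} sorted ascending satisfies m_{(j)} ≥ j for every j (i.e., the j-th smallest support length is at least j). Then for generic choices of the nonzero entries, M is invertible; conversely if m_{(j)} < j for some j, then M is singular for every choice of entries. -/

import Mathlib

/-!
If every `c` bounds the number of rows of support length `≤ c`, then Hall's marriage theorem
matches each row `j` injectively to a column `σ j < m j`, and the permutation matrix of `σ` is
an invertible matrix with the prescribed supports. Conversely, if more than `c` rows are
supported in the first `c` columns, these rows are linearly independent vectors in a space of
dimension `c`, which is impossible for the rows of an invertible matrix.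
-/

open Finset

theorem LinearIndependent.card_le_card_of_forall_notMem_eq_zero {R ι κ : Type*} [Semiring R]
    [StrongRankCondition R] [Fintype ι] {v : ι → κ → R} (hv : LinearIndependent R v)
    {T : Finset κ} (hvT : ∀ i, ∀ k ∉ T, v i k = 0) : Fintype.card ι ≤ #T := by
  have hext : Function.ExtendByZero.linearMap R ((↑) : T → κ) ∘ (fun i (k : T) => v i k) = v := by
    ext i k
    by_cases hk : k ∈ T
    · exact Subtype.val_injective.extend_apply (fun k : T => v i k) 0 ⟨k, hk⟩
    · rw [hvT i k hk]
      exact Function.extend_apply' (fun k : T => v i k) (0 : κ → R) k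
        fun ⟨a, ha⟩ => hk (ha ▸ a.2)
  have := (LinearIndependent.of_comp _ (hext ▸ hv)).fintype_card_le_finrank
  rwa [Module.finrank_fintype_fun_eq_card, Fintype.card_coe] at this

theorem Matrix.card_le_card_of_isUnit_of_forall_notMem_eq_zero {ι K : Type*} [Fintype ι]
    [DecidableEq ι] [Field K] {M : Matrix ι ι K} (hM : IsUnit M) {S T : Finset ι}
    (hST : ∀ j ∈ S, ∀ i ∉ T, M j i = 0) : #S ≤ #T := by
  have hrows := (Matrix.linearIndependent_rows_iff_isUnit.mpr hM).comp ((↑) : S → ι)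
    Subtype.val_injective
  simpa using hrows.card_le_card_of_forall_notMem_eq_zero fun j => hST j j.2

theorem exists_perm_val_lt_of_card_filter_le {n : ℕ} (m : Fin n → ℕ)
    (hm : ∀ c, #{j | m j ≤ c} ≤ c) : ∃ σ : Equiv.Perm (Fin n), ∀ j, (σ j : ℕ) < m j := by
  let t : Fin n → Finset (Fin n) := fun j => {i | (i : ℕ) < m j}
  have hall : ∀ s : Finset (Fin n), #s ≤ #(s.biUnion t) := by
    intro s
    rcases s.eq_empty_or_nonempty with rfl | hs
    · simp
    obtain ⟨j₀, hj₀, hj₀max⟩ := s.exists_max_image m hs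
    have hs_le : #s ≤ m j₀ :=
      (card_le_card fun j hj => mem_filter.mpr ⟨mem_univ j, hj₀max j hj⟩).trans (hm (m j₀))
    calc #s ≤ min n (m j₀) := le_min (card_le_univ s |>.trans_eq (Fintype.card_fin n)) hs_le
      _ = #(t j₀) := Fin.card_filter_val_lt.symm
      _ ≤ #(s.biUnion t) := card_le_card (subset_biUnion_of_mem t hj₀)
  obtain ⟨f, hf, hft⟩ := (all_card_le_biUnion_card_iff_existsInjective' t).mp hall
  exact ⟨Equiv.ofBijective f (Finite.injective_iff_bijective.mp hf),
    fun j => (mem_filter.mp (hft j)).2⟩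

theorem Equiv.Perm.isUnit_permMatrix {n R : Type*} [DecidableEq n] [Fintype n] [Semiring R]
    (σ : Equiv.Perm n) : IsUnit (σ.permMatrix R) := by
  simpa using (Group.isUnit σ⁻¹).map (Matrix.permMatrixHom (n := n) (R := R))

theorem stmt_15_general {F : Type*} [Field F] {n : ℕ} (m : Fin n → ℕ) :
    ((∀ c : ℕ, (univ.filter fun j : Fin n => m j ≤ c).card ≤ c) →
      ∃ M : Matrix (Fin n) (Fin n) F,
        (∀ (j : Fin n) (i : Fin n), m j ≤ (i : ℕ) → M j i = 0) ∧ IsUnit M) ∧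
    ((∃ c : ℕ, c < (univ.filter fun j : Fin n => m j ≤ c).card) →
      ∀ M : Matrix (Fin n) (Fin n) F,
        (∀ (j : Fin n) (i : Fin n), m j ≤ (i : ℕ) → M j i = 0) → ¬ IsUnit M) := by
  refine ⟨fun hm => ?_, ?_⟩
  · obtain ⟨σ, hσ⟩ := exists_perm_val_lt_of_card_filter_le m hm
    refine ⟨σ.permMatrix F, fun j i hji => ?_, σ.isUnit_permMatrix⟩
    have hne : σ j ≠ i := fun h => (hσ j).not_ge (h ▸ hji)
    simp [Equiv.Perm.permMatrix, PEquiv.toMatrix_apply, hne]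
  · rintro ⟨c, hc⟩ M hM hunit
    have hST := Matrix.card_le_card_of_isUnit_of_forall_notMem_eq_zero hunit
      (S := {j | m j ≤ c}) (T := {i | (i : ℕ) < c}) fun j hj i hi =>
        hM j i ((mem_filter.mp hj).2.trans (not_lt.mp fun h => hi (by simpa using h)))
    rw [Fin.card_filter_val_lt] at hST
    omega

/-- Hall-type condition for staircase matrices: rows supported
on prefixes of lengths `m j` admit an invertible matrix iff the sorted support
lengths dominate the identity, i.e. for every `c` at most `c` rows have
support length ≤ `c`. Genericity is formalized as existence of a choice of
entries within the supports; the converse direction is exact. -/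
theorem stmt_15 {F : Type*} [Field F] {n : ℕ} (m : Fin n → ℕ)
    (hm : ∀ j, 1 ≤ m j ∧ m j ≤ n) :
    ((∀ c : ℕ, (univ.filter fun j : Fin n => m j ≤ c).card ≤ c) →
      ∃ M : Matrix (Fin n) (Fin n) F,
        (∀ (j : Fin n) (i : Fin n), m j ≤ (i : ℕ) → M j i = 0) ∧ IsUnit M) ∧
    ((∃ c : ℕ, c < (univ.filter fun j : Fin n => m j ≤ c).card) →
      ∀ M : Matrix (Fin n) (Fin n) F,
        (∀ (j : Fin n) (i : Fin n), m j ≤ (i : ℕ) → M j i = 0) → ¬ IsUnit M) :=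
  stmt_15_general m
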